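/- arXiv:1409.6142 — 2 statements merged into one kernel-verified Lean document; each statement's English description precedes it below -/
import Mathlib

section
/- Let A = (Q, Σ, δ, ρ) be a connected invertible-reversible Mealy automaton with #Q = 3 and finite connection degree c = cd(A) > 0. If for every N there exist words u over Q and v = v_1⋯v_N ∈ Q^N with ℓ(u v_1⋯v_i) = 2 for all 1 ≤ i ≤ N (the lengths of 2-blocks in the orbit tree are unbounded), then there exists an infinite word w = w_1 w_2 ⋯ over Q such that ℓ(w_1⋯w_i) = 3 for all i ≤ c and ℓ(w_1⋯w_i) = 2 for all i > c. If instead the lengths of 2-blocks are bounded with supremum N, then there exists a word w of length c+N with ℓ(w_1⋯w_i) = 3 for i ≤ c and ℓ(w_1⋯w_i) = 2 for c < i ≤ c+N, and there is no word of length c+N+1 with ℓ(w_1⋯w_i) = 3 for i ≤ c and ℓ(w_1⋯w_i) = 2 for c < i ≤ c+N+1. -/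
namespace MealyFormal

variable {Q X : Type*}

/-- Extended transition function of the dual automaton: the action of a letter
`i ∈ Σ` on words over the stateset `Q`, defined by
`δ_i(ε) = ε` and `δ_i(x w) = δ_i(x) δ_{ρ_x(i)}(w)`. -/
def dExt (δ : X → Q → Q) (ρ : Q → X → X) : X → List Q → List Q
  | _, [] => []
  | i, x :: w => δ i x :: dExt δ ρ (ρ x i) w

/-- The action `δ_s = δ_{s_n} ∘ ⋯ ∘ δ_{s_1}` of a word `s` over `Σ` on words over `Q`. -/
def dWord (δ : X → Q → Q) (ρ : Q → X → X) : List X → List Q → List Q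
  | [], u => u
  | i :: s, u => dWord δ ρ s (dExt δ ρ i u)

/-- Extended production function: the action of a state `x ∈ Q` on words over the
alphabet `Σ`, defined by `ρ_x(ε) = ε` and `ρ_x(i s) = ρ_x(i) ρ_{δ_i(x)}(s)`. -/
def rExt (δ : X → Q → Q) (ρ : Q → X → X) : Q → List X → List X
  | _, [] => []
  | x, i :: s => ρ x i :: rExt δ ρ (δ i x) s

/-- The action `ρ_u = ρ_{x_n} ∘ ⋯ ∘ ρ_{x_1}` of a word `u = x_1⋯x_n` over `Q`
on words over `Σ`. -/
def rWord (δ : X → Q → Q) (ρ : Q → X → X) : List Q → List X → List X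
  | [], s => s
  | x :: u, s => rWord δ ρ u (rExt δ ρ x s)

/-- `v` lies in the orbit of `u` under the action of the dual automaton. -/
def InOrbit (δ : X → Q → Q) (ρ : Q → X → X) (u v : List Q) : Prop :=
  ∃ s : List X, dWord δ ρ s u = v

/-- The orbit (connected component of the corresponding power) of a word over `Q`. -/
def orbit (δ : X → Q → Q) (ρ : Q → X → X) (u : List Q) : Set (List Q) :=
  {v | InOrbit δ ρ u v}

/-- The action of the dual automaton on `Q^n` is transitive, i.e. `A^n` is connected. -/
def LevelTransitive (δ : X → Q → Q) (ρ : Q → X → X) (n : ℕ) : Prop :=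
  ∀ u v : List Q, u.length = n → v.length = n → InOrbit δ ρ u v

/-- The label `ℓ(u x)` of the nonempty word `u x`:
the number of `z ∈ Q` with `u z` in the orbit of `u x`. -/
noncomputable def label (δ : X → Q → Q) (ρ : Q → X → X) (u : List Q) (x : Q) : ℕ :=
  Set.ncard {z : Q | InOrbit δ ρ (u ++ [x]) (u ++ [z])}

/-- Prefix of length `i` of the (infinite) word `w = w_1 w_2 ⋯`. -/
def pref (w : ℕ → Q) (i : ℕ) : List Q := (List.range i).map w

/-- The `n`-th power `u^n` of a word `u`. -/
def wpow (u : List Q) (n : ℕ) : List Q := (List.replicate n u).flatten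

/-- The group generated by the Mealy automaton: the subgroup of permutations of `Σ*`
generated by the production functions `ρ_x`, `x ∈ Q`. -/
def autGroup (δ : X → Q → Q) (ρ : Q → X → X) : Subgroup (Equiv.Perm (List X)) :=
  Subgroup.closure {π : Equiv.Perm (List X) | ∃ q : Q, ⇑π = rExt δ ρ q}

/-- The semigroup of maps `Σ* → Σ*` generated under composition by the `ρ_x`, `x ∈ Q`. -/
def prodSemigroup (δ : X → Q → Q) (ρ : Q → X → X) :
    Subsemigroup (Function.End (List X)) :=
  Subsemigroup.closure {f : Function.End (List X) | ∃ q : Q, f = rExt δ ρ q}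

/-- The semigroup of maps `Q* → Q*` generated under composition by the `δ_i`, `i ∈ Σ`. -/
def dualSemigroup (δ : X → Q → Q) (ρ : Q → X → X) :
    Subsemigroup (Function.End (List Q)) :=
  Subsemigroup.closure {f : Function.End (List Q) | ∃ i : X, f = dExt δ ρ i}

/-- A word `w` over `Q` is orbital if all its factors of length `c+1`
belong to the reduction orbit `O2`. -/
def Orbital (c : ℕ) (O2 : Set (List Q)) (w : List Q) : Prop :=
  ∀ f : List Q, f.length = c + 1 → f <:+: w → f ∈ O2

/-- A word is cyclically orbital if each of its powers is orbital. -/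
def CycOrbital (c : ℕ) (O2 : Set (List Q)) (w : List Q) : Prop :=
  ∀ n : ℕ, Orbital c O2 (wpow w n)

/-- The standing setup: `A` is a connected invertible-reversible Mealy automaton
with 3 states, `0 < c = cd(A) < ∞`, and `Q^{c+1}` splits into exactly two orbits,
of sizes `2·3^c` and `3^c`; `O2` is the reduction orbit, of size `2·3^c`. -/
structure StandingSetup (δ : X → Q → Q) (ρ : Q → X → X) (c : ℕ) (O2 : Set (List Q)) :
    Prop where
  card_three : Nat.card Q = 3
  invertible : ∀ q : Q, Function.Bijective (ρ q)
  reversible : ∀ i : X, Function.Bijective (δ i)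
  connected : LevelTransitive δ ρ 1
  c_pos : 0 < c
  trans_c : LevelTransitive δ ρ c
  not_trans_succ : ¬ LevelTransitive δ ρ (c + 1)
  O2_is_orbit : ∃ w : List Q, w.length = c + 1 ∧ O2 = orbit δ ρ w
  O2_card : O2.ncard = 2 * 3 ^ c
  other_is_orbit : ∃ w : List Q, w.length = c + 1 ∧
    orbit δ ρ w = {v : List Q | v.length = c + 1} \ O2
  other_card : ({v : List Q | v.length = c + 1} \ O2).ncard = 3 ^ c


section Aux

variable {Q X : Type*} (δ : X → Q → Q) (ρ : Q → X → X)

lemma dExt_length (i : X) (u : List Q) : (dExt δ ρ i u).length = u.length := by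
  induction u generalizing i with
  | nil => rfl
  | cons x w ih => simp [dExt, ih]

lemma dWord_length (s : List X) (u : List Q) : (dWord δ ρ s u).length = u.length := by
  induction s generalizing u with
  | nil => rfl
  | cons i s ih => simp [dWord, ih, dExt_length]

lemma dExt_append (i : X) (a b : List Q) :
    ∃ j, dExt δ ρ i (a ++ b) = dExt δ ρ i a ++ dExt δ ρ j b := by
  induction a generalizing i with
  | nil => exact ⟨i, rfl⟩
  | cons x a ih =>
    obtain ⟨j, hj⟩ := ih (ρ x i)
    exact ⟨j, by simp [dExt, hj]⟩

lemma dWord_append (s : List X) (a b : List Q) :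
    ∃ t, dWord δ ρ s (a ++ b) = dWord δ ρ s a ++ dWord δ ρ t b := by
  induction s generalizing a b with
  | nil => exact ⟨[], rfl⟩
  | cons i s ih =>
    obtain ⟨j, hj⟩ := dExt_append δ ρ i a b
    obtain ⟨t, ht⟩ := ih (dExt δ ρ i a) (dExt δ ρ j b)
    exact ⟨j :: t, by simp [dWord, hj, ht]⟩

lemma dWord_word_append (s t : List X) (u : List Q) :
    dWord δ ρ (s ++ t) u = dWord δ ρ t (dWord δ ρ s u) := by
  induction s generalizing u with
  | nil => rfl
  | cons i s ih => simp [dWord, ih]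

lemma dExt_injective (hrev : ∀ i : X, Function.Injective (δ i)) (i : X) :
    Function.Injective (dExt δ ρ i) := by
  intro u v h
  induction u generalizing i v with
  | nil => cases v with
    | nil => rfl
    | cons y v => simp [dExt] at h
  | cons x u ih =>
    cases v with
    | nil => simp [dExt] at h
    | cons y v =>
      simp only [dExt, List.cons.injEq] at h
      obtain ⟨h1, h2⟩ := h
      obtain rfl := hrev i h1
      rw [ih (ρ x i) h2]

lemma dWord_injective (hrev : ∀ i : X, Function.Injective (δ i)) (s : List X) :
    Function.Injective (dWord δ ρ s) := by
  induction s with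
  | nil => exact fun a b h => h
  | cons i s ih => exact fun a b h => dExt_injective δ ρ hrev i (ih h)

lemma inOrbit_trans {u v w : List Q} (h1 : InOrbit δ ρ u v) (h2 : InOrbit δ ρ v w) :
    InOrbit δ ρ u w := by
  obtain ⟨s, hs⟩ := h1; obtain ⟨t, ht⟩ := h2
  exact ⟨s ++ t, by rw [dWord_word_append, hs, ht]⟩

lemma inOrbit_symm [Finite Q] (hrev : ∀ i : X, Function.Injective (δ i))
    {u v : List Q} (h : InOrbit δ ρ u v) : InOrbit δ ρ v u := by
  obtain ⟨s, hs⟩ := h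
  set n := u.length with hn
  let S := {l : List Q // l.length = n}
  haveI : Finite S := by
    refine Finite.of_injective
      (fun l : S => (fun i : Fin n => l.1.get (Fin.cast l.2.symm i))) ?_
    intro a b hab
    apply Subtype.ext
    apply List.ext_get (by rw [a.2, b.2])
    intro i h1 h2
    have := congrFun hab ⟨i, by rw [← a.2]; exact h1⟩
    simpa [Fin.cast] using this
  let e : S → S := fun l => ⟨dWord δ ρ s l.1, by rw [dWord_length]; exact l.2⟩
  have he : Function.Injective e := by
    intro a b hab
    exact Subtype.ext (dWord_injective δ ρ hrev s (congrArg Subtype.val hab))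
  have iter : ∀ (k : ℕ) (x : S),
      (e^[k] x).1 = dWord δ ρ (List.flatten (List.replicate k s)) x.1 := by
    intro k
    induction k with
    | zero => intro x; rfl
    | succ k ih =>
      intro x
      rw [Function.iterate_succ_apply, ih, List.replicate_succ, List.flatten_cons,
        dWord_word_append]
  have key : ∀ a b : ℕ, a < b → e^[a] = e^[b] → ∀ x, e^[b - a] x = x := by
    intro a b hlt hab x
    have h1 : e^[a] (e^[b - a] x) = e^[a] x := by
      rw [← Function.iterate_add_apply, show a + (b - a) = b by omega, hab]
    exact he.iterate a h1
  obtain ⟨a, b, hne, hab⟩ := Finite.exists_ne_map_eq_of_infinite (fun k : ℕ => e^[k])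
  have hm : ∃ m, 0 < m ∧ ∀ x, e^[m] x = x := by
    rcases Nat.lt_or_ge a b with hlt | hge
    · exact ⟨b - a, by omega, key a b hlt hab⟩
    · have hba : b < a := by omega
      exact ⟨a - b, by omega, key b a hba hab.symm⟩
  obtain ⟨m, hm0, hmid⟩ := hm
  obtain ⟨k, rfl⟩ : ∃ k, m = k + 1 := ⟨m - 1, by omega⟩
  have hvlen : v.length = n := by rw [← hs, dWord_length]
  refine ⟨List.flatten (List.replicate k s), ?_⟩
  have h2 : (e^[k + 1] (⟨u, rfl⟩ : S)).1 = u := by rw [hmid]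
  rw [Function.iterate_succ_apply] at h2
  have h4 : e (⟨u, rfl⟩ : S) = ⟨v, hvlen⟩ := Subtype.ext hs
  rw [h4] at h2
  exact (iter k ⟨v, hvlen⟩).symm.trans h2

lemma levelTransitive_mono [Nonempty Q] {n m : ℕ} (h : LevelTransitive δ ρ n)
    (hmn : m ≤ n) : LevelTransitive δ ρ m := by
  intro u v hu hv
  obtain ⟨q⟩ := ‹Nonempty Q›
  obtain ⟨s, hs⟩ := h (u ++ List.replicate (n - m) q) (v ++ List.replicate (n - m) q)
    (by simp [hu]; omega) (by simp [hv]; omega)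
  obtain ⟨t, ht⟩ := dWord_append δ ρ s u (List.replicate (n - m) q)
  rw [ht] at hs
  exact ⟨s, List.append_inj_left hs (by rw [dWord_length, hu, hv])⟩

lemma label_eq_three (hcard : Nat.card Q = 3) {u : List Q} (x : Q)
    (htr : LevelTransitive δ ρ (u.length + 1)) : label δ ρ u x = 3 := by
  have hZ : {z : Q | InOrbit δ ρ (u ++ [x]) (u ++ [z])} = Set.univ := by
    apply Set.eq_univ_of_forall
    intro z
    exact htr _ _ (by simp) (by simp)
  rw [label, hZ, Set.ncard_univ, hcard]

lemma label_le_three [Finite Q] (hcard : Nat.card Q = 3) (u : List Q) (x : Q) :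
    label δ ρ u x ≤ 3 := by
  rw [label]
  calc Set.ncard _ ≤ (Set.univ : Set Q).ncard :=
        Set.ncard_le_ncard (Set.subset_univ _) Set.finite_univ
    _ = 3 := by rw [Set.ncard_univ, hcard]

lemma label_le_two_at_c [Finite Q] (hcard : Nat.card Q = 3)
    (hrev : ∀ i : X, Function.Injective (δ i)) {c : ℕ}
    (htrans : LevelTransitive δ ρ c) (hnt : ¬ LevelTransitive δ ρ (c + 1))
    {q : List Q} {x : Q} (hq : q.length = c) : label δ ρ q x ≤ 2 := by
  by_contra hgt
  have h3 : label δ ρ q x = 3 :=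
    le_antisymm (label_le_three δ ρ hcard q x) (by omega)
  have hZ : {z : Q | InOrbit δ ρ (q ++ [x]) (q ++ [z])} = Set.univ := by
    apply Set.eq_of_subset_of_ncard_le (Set.subset_univ _)
    rw [Set.ncard_univ, hcard]
    rw [label] at h3
    omega
  have horb : ∀ z : Q, InOrbit δ ρ (q ++ [x]) (q ++ [z]) := by
    intro z
    exact Set.eq_univ_iff_forall.mp hZ z
  apply hnt
  have hmove : ∀ a : List Q, a.length = c + 1 → ∃ β : Q, InOrbit δ ρ a (q ++ [β]) := by
    intro a ha
    have hane : a ≠ [] := by intro hh; rw [hh] at ha; simp at ha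
    obtain ⟨s, hs⟩ := htrans a.dropLast q (by simp [List.length_dropLast, ha]) hq
    obtain ⟨t, ht⟩ := dWord_append δ ρ s a.dropLast [a.getLast hane]
    have hlen1 : (dWord δ ρ t [a.getLast hane]).length = 1 := by rw [dWord_length]; rfl
    obtain ⟨β, hβ⟩ := List.length_eq_one_iff.mp hlen1
    refine ⟨β, s, ?_⟩
    conv_lhs => rw [← List.dropLast_append_getLast hane]
    rw [ht, hs, hβ]
  intro a b ha hb
  obtain ⟨β, hβ⟩ := hmove a ha
  obtain ⟨γ, hγ⟩ := hmove b hb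
  exact inOrbit_trans δ ρ hβ (inOrbit_trans δ ρ (inOrbit_symm δ ρ hrev (horb β))
    (inOrbit_trans δ ρ (horb γ) (inOrbit_symm δ ρ hrev hγ)))

lemma label_append_le [Finite Q] (a p : List Q) (x : Q) :
    label δ ρ (a ++ p) x ≤ label δ ρ p x := by
  apply Set.ncard_le_ncard ?_ (Set.toFinite _)
  intro z hz
  obtain ⟨s, hs⟩ := hz
  rw [List.append_assoc, List.append_assoc] at hs
  obtain ⟨t, ht⟩ := dWord_append δ ρ s a (p ++ [x])
  rw [ht] at hs
  exact ⟨t, List.append_inj_right hs (by rw [dWord_length])⟩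

lemma label_le_two [Finite Q] (hcard : Nat.card Q = 3)
    (hrev : ∀ i : X, Function.Injective (δ i)) {c : ℕ}
    (htrans : LevelTransitive δ ρ c) (hnt : ¬ LevelTransitive δ ρ (c + 1))
    {w : List Q} {x : Q} (hw : c ≤ w.length) : label δ ρ w x ≤ 2 := by
  have hsplit : w = w.take (w.length - c) ++ w.drop (w.length - c) :=
    (List.take_append_drop _ _).symm
  calc label δ ρ w x
      = label δ ρ (w.take (w.length - c) ++ w.drop (w.length - c)) x := by rw [← hsplit]
    _ ≤ label δ ρ (w.drop (w.length - c)) x := label_append_le δ ρ _ _ x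
    _ ≤ 2 := label_le_two_at_c δ ρ hcard hrev htrans hnt (by rw [List.length_drop]; omega)

lemma pref_length (w : ℕ → Q) (i : ℕ) : (pref w i).length = i := by simp [pref]

lemma pref_add (w : ℕ → Q) (a b : ℕ) :
    pref w (a + b) = pref w a ++ pref (fun j => w (a + j)) b := by
  simp [pref, List.range_add, Function.comp]

lemma nonempty_of_card_three (hcard : Nat.card Q = 3) : Nonempty Q := by
  by_contra h
  rw [not_nonempty_iff] at h
  rw [Nat.card_of_isEmpty] at hcard
  omega

lemma run_exists [Finite Q] (hcard : Nat.card Q = 3)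
    (hrev : ∀ i : X, Function.Injective (δ i)) {c : ℕ}
    (htrans : LevelTransitive δ ρ c) (hnt : ¬ LevelTransitive δ ρ (c + 1)) {N : ℕ}
    (hyp : ∃ (u : List Q) (v : ℕ → Q), ∀ i < N, label δ ρ (u ++ pref v i) (v i) = 2) :
    ∃ w : ℕ → Q, ∀ i, c ≤ i → i < c + N → label δ ρ (pref w i) (w i) = 2 := by
  have hne : Nonempty Q := nonempty_of_card_three hcard
  obtain ⟨u, v, h⟩ := hyp
  rcases Nat.eq_zero_or_pos N with rfl | hN
  · obtain ⟨q⟩ := hne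
    exact ⟨fun _ => q, fun i h1 h2 => by omega⟩
  have hcu : c ≤ u.length := by
    by_contra hlt
    have h0 := h 0 hN
    have hle : (u ++ pref v 0).length + 1 ≤ c := by
      rw [List.length_append, pref_length]; omega
    have h3 : label δ ρ (u ++ pref v 0) (v 0) = 3 :=
      label_eq_three δ ρ hcard _ (levelTransitive_mono δ ρ htrans hle)
    rw [h0] at h3
    omega
  set p := u.drop (u.length - c) with hp
  have hplen : p.length = c := by rw [hp, List.length_drop]; omega
  have hrun : ∀ i < N, label δ ρ (p ++ pref v i) (v i) = 2 := by
    intro i hi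
    have hle : label δ ρ (p ++ pref v i) (v i) ≤ 2 :=
      label_le_two δ ρ hcard hrev htrans hnt (by rw [List.length_append, hplen]; omega)
    have hge : 2 ≤ label δ ρ (p ++ pref v i) (v i) := by
      have h2 := h i hi
      have hsplit : u ++ pref v i = u.take (u.length - c) ++ (p ++ pref v i) := by
        rw [← List.append_assoc, hp, List.take_append_drop]
      rw [hsplit] at h2
      rw [← h2]
      exact label_append_le δ ρ _ _ _
    omega
  obtain ⟨q0⟩ := hne
  set w : ℕ → Q := fun j => if j < c then p.getD j q0 else v (j - c) with hwdef
  refine ⟨w, ?_⟩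
  intro i hci hiN
  obtain ⟨i', rfl⟩ : ∃ i', i = c + i' := ⟨i - c, by omega⟩
  have hw1 : pref w c = p := by
    apply List.ext_getElem (by rw [pref_length, hplen])
    intro n h1 h2
    have hn : n < c := by rw [pref_length] at h1; exact h1
    simp only [pref, List.getElem_map, List.getElem_range, hwdef, if_pos hn]
    exact List.getD_eq_getElem p q0 h2
  have hw2 : pref w (c + i') = p ++ pref v i' := by
    rw [pref_add, hw1]
    congr 1
    simp only [pref]
    apply List.map_congr_left
    intro a ha
    have haa : a < i' := List.mem_range.mp ha
    simp only [hwdef]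
    rw [if_neg (by omega)]
    congr 1
    omega
  have hwv : w (c + i') = v i' := by
    simp only [hwdef]
    rw [if_neg (by omega)]
    congr 1
    omega
  rw [hw2, hwv]
  exact hrun i' (by omega)

end Aux

/-- (1) If the lengths of the 2-blocks in the orbit tree are unbounded,
the orbit tree admits a branch labeled `3^c 2^ω`.  (2) If they are bounded with
supremum `N`, the orbit tree admits an initial path labeled `3^c 2^N` and none
labeled `3^c 2^{N+1}`. -/
theorem two_blocks_dichotomy
    {Q X : Type*} [Finite Q] [Finite X] [Nonempty X]
    (δ : X → Q → Q) (ρ : Q → X → X) (c : ℕ)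
    (hcard : Nat.card Q = 3)
    (hinv : ∀ q : Q, Function.Bijective (ρ q))
    (hrev : ∀ i : X, Function.Bijective (δ i))
    (hconn : LevelTransitive δ ρ 1)
    (hc : 0 < c)
    (htrans : LevelTransitive δ ρ c)
    (hnt : ¬ LevelTransitive δ ρ (c + 1)) :
    ((∀ N : ℕ, ∃ (u : List Q) (v : ℕ → Q),
        ∀ i < N, label δ ρ (u ++ pref v i) (v i) = 2) →
      ∃ w : ℕ → Q, (∀ i < c, label δ ρ (pref w i) (w i) = 3) ∧
        (∀ i, c ≤ i → label δ ρ (pref w i) (w i) = 2)) ∧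
    (∀ N : ℕ,
      (∃ (u : List Q) (v : ℕ → Q), ∀ i < N, label δ ρ (u ++ pref v i) (v i) = 2) →
      (¬ ∃ (u : List Q) (v : ℕ → Q), ∀ i < N + 1,
          label δ ρ (u ++ pref v i) (v i) = 2) →
      ((∃ w : ℕ → Q, (∀ i < c, label δ ρ (pref w i) (w i) = 3) ∧
          (∀ i, c ≤ i → i < c + N → label δ ρ (pref w i) (w i) = 2)) ∧
        ¬ ∃ w : ℕ → Q, (∀ i < c, label δ ρ (pref w i) (w i) = 3) ∧
          (∀ i, c ≤ i → i < c + N + 1 → label δ ρ (pref w i) (w i) = 2))) := by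
  have hrevinj : ∀ i : X, Function.Injective (δ i) := fun i => (hrev i).injective
  have hne : Nonempty Q := nonempty_of_card_three hcard
  have h3 : ∀ (w : ℕ → Q) (i : ℕ), i < c → label δ ρ (pref w i) (w i) = 3 := by
    intro w i hi
    apply label_eq_three δ ρ hcard
    apply levelTransitive_mono δ ρ htrans
    rw [pref_length]
    omega
  constructor
  · intro hyp
    have hws : ∀ N : ℕ, ∃ w : ℕ → Q,
        ∀ i, c ≤ i → i < c + N → label δ ρ (pref w i) (w i) = 2 :=
      fun N => run_exists δ ρ hcard hrevinj htrans hnt (hyp N)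
    choose ws hws using hws
    haveI : Filter.NeBot (Filter.cofinite : Filter ℕ) := Filter.cofinite_neBot
    set U : Ultrafilter ℕ := Ultrafilter.of Filter.cofinite with hU
    have hUc : ↑U ≤ (Filter.cofinite : Filter ℕ) := Ultrafilter.of_le _
    have hq : ∀ j : ℕ, ∃ q : Q, {N | ws N j = q} ∈ U := by
      intro j
      by_contra hno
      push_neg at hno
      have hcompl : ∀ q : Q, {N | ws N j = q}ᶜ ∈ U := fun q =>
        Ultrafilter.compl_mem_iff_notMem.mpr (hno q)
      have hI : (⋂ q : Q, {N | ws N j = q}ᶜ) ∈ U := Filter.iInter_mem.mpr hcompl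
      have hempty : (⋂ q : Q, {N | ws N j = q}ᶜ) = (∅ : Set ℕ) := by
        ext N
        simp only [Set.mem_iInter, Set.mem_compl_iff, Set.mem_setOf_eq,
          Set.mem_empty_iff_false, iff_false, not_forall, not_not]
        exact ⟨ws N j, rfl⟩
      rw [hempty] at hI
      exact Ultrafilter.empty_notMem hI
    choose w hw using hq
    refine ⟨w, fun i hi => h3 w i hi, ?_⟩
    intro i hci
    have hB : (⋂ j : Fin (i + 1), {N | ws N (j : ℕ) = w (j : ℕ)}) ∈ U :=
      Filter.iInter_mem.mpr fun j => hw _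
    have hC : {N : ℕ | i < N} ∈ U := by
      apply hUc
      rw [Filter.mem_cofinite]
      have : {N : ℕ | i < N}ᶜ = Set.Iic i := by
        ext N
        simp only [Set.mem_compl_iff, Set.mem_setOf_eq, Set.mem_Iic, not_lt]
      rw [this]
      exact Set.finite_Iic i
    obtain ⟨N, hNB, hNC⟩ := Ultrafilter.nonempty_of_mem (Filter.inter_mem hB hC)
    have hagree : ∀ j ≤ i, ws N j = w j := by
      intro j hj
      exact Set.mem_iInter.mp hNB ⟨j, by omega⟩
    have hNi : i < N := hNC
    have hpref : pref w i = pref (ws N) i := by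
      simp only [pref]
      apply List.map_congr_left
      intro a ha
      exact (hagree a (by have := List.mem_range.mp ha; omega)).symm
    rw [hpref, ← hagree i le_rfl]
    exact hws N i hci (by omega)
  · intro N hex hnex
    constructor
    · obtain ⟨w, hw⟩ := run_exists δ ρ hcard hrevinj htrans hnt hex
      exact ⟨w, fun i hi => h3 w i hi, hw⟩
    · rintro ⟨w, hw3, hw2⟩
      apply hnex
      refine ⟨pref w c, fun i => w (c + i), ?_⟩
      intro i hi
      rw [show pref w c ++ pref (fun j => w (c + j)) i = pref w (c + i) from
        (pref_add w c i).symm]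
      exact hw2 (c + i) (by omega) (by omega)

end MealyFormal
end

section
/- Let A = (Q, Σ, δ, ρ) be an invertible-reversible Mealy automaton and c an integer such that the action of the group generated by {δ_i : i ∈ Σ} on Q^c is transitive (i.e., A^c is connected). Then for every x ∈ Q, every u ∈ Q^c and every v ∈ Q^c, there is a word in the orbit of x u in Q^{c+1} whose suffix of length c equals v; that is, the set of length-c suffixes of all words in the orbit of x u is the whole of Q^c. -/
namespace MealyFormal

variable {Q X : Type*}

/-- The state reached from `x` after reading the word `s`. -/
def stRun (δ : X → Q → Q) : Q → List X → Q
  | x, [] => x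
  | x, i :: s => stRun δ (δ i x) s

lemma dWord_cons (δ : X → Q → Q) (ρ : Q → X → X) :
    ∀ (s : List X) (x : Q) (u : List Q),
      dWord δ ρ s (x :: u) = stRun δ x s :: dWord δ ρ (rExt δ ρ x s) u := by
  intro s
  induction s with
  | nil => intro x u; rfl
  | cons i s ih =>
      intro x u
      simp only [dWord, dExt, rExt, stRun]
      exact ih (δ i x) (dExt δ ρ (ρ x i) u)

lemma rExt_surj (δ : X → Q → Q) (ρ : Q → X → X)
    (hinv : ∀ q : Q, Function.Bijective (ρ q)) :
    ∀ (t : List X) (x : Q), ∃ s : List X, rExt δ ρ x s = t := by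
  intro t
  induction t with
  | nil => intro x; exact ⟨[], rfl⟩
  | cons j t ih =>
      intro x
      obtain ⟨i, hi⟩ := (hinv x).2 j
      obtain ⟨s, hs⟩ := ih (δ i x)
      exact ⟨i :: s, by simp [rExt, hi, hs]⟩

/-- If `A^c` is connected, then for every `x ∈ Q` and all
`u, v ∈ Q^c`, the orbit of `x :: u` in `Q^{c+1}` contains a word whose suffix of
length `c` is `v`. -/
theorem full_suffix_orbit
    {Q X : Type*} [Finite Q] [Finite X] [Nonempty Q] [Nonempty X]
    (δ : X → Q → Q) (ρ : Q → X → X) (c : ℕ)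
    (hinv : ∀ q : Q, Function.Bijective (ρ q))
    (hrev : ∀ i : X, Function.Bijective (δ i))
    (htrans : LevelTransitive δ ρ c)
    (x : Q) (u v : List Q) (hu : u.length = c) (hv : v.length = c) :
    ∃ y : Q, InOrbit δ ρ (x :: u) (y :: v) := by
  obtain ⟨t, ht⟩ := htrans u v hu hv
  obtain ⟨s, hs⟩ := rExt_surj δ ρ hinv t x
  exact ⟨stRun δ x s, s, by rw [dWord_cons, hs, ht]⟩

end MealyFormal
end
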